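/- arXiv:1707.08334 — 4 statements merged into one kernel-verified Lean document; each statement's English description precedes it below -/
import Mathlib

section
/- Let P be an n×n positive semidefinite matrix with Cholesky-type factorization P = X Xᵀ, and let Ω be an n×n positive semidefinite matrix. If α, β ≥ 0 satisfy α I ≤ Xᵀ Ω X ≤ β I, then (1/(1+β)) P ≤ X (I + Xᵀ Ω X)⁻¹ Xᵀ ≤ (1/(1+α)) P. -/
open Matrix

lemma psd_smul {n : ℕ} {A : Matrix (Fin n) (Fin n) ℝ} (hA : A.PosSemidef) {c : ℝ} (hc : 0 ≤ c) :
    (c • A).PosSemidef := by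
  refine ⟨?_, fun x => ?_⟩
  · unfold Matrix.IsHermitian
    rw [conjTranspose_smul, hA.1]
    simp
  · exact (hA.smul hc).2 x

open scoped MatrixOrder in
lemma key {n : ℕ} {M : Matrix (Fin n) (Fin n) ℝ} (hM : M.PosSemidef) {D : Matrix (Fin n) (Fin n) ℝ}
    (hD : D.PosSemidef) {c : ℝ} (hc : 0 ≤ c)
    (hId : c • D = 1 - c • (1 + M)) :
    ((1 + M)⁻¹ - c • (1 : Matrix (Fin n) (Fin n) ℝ)).PosSemidef := by
  set S : Matrix (Fin n) (Fin n) ℝ := 1 + M with hS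
  have hSpd : S.PosDef := Matrix.PosDef.add_posSemidef Matrix.PosDef.one hM
  have hSpsd := hSpd.posSemidef
  set R := CFC.sqrt S with hR
  have hRpsd : R.PosSemidef := (CFC.sqrt_nonneg S).posSemidef
  have hRR : R * R = S := CFC.sqrt_mul_sqrt_self S hSpsd.nonneg
  have hRdet : IsUnit R.det := by
    have h2 : R.det * R.det = S.det := by rw [← det_mul, hRR]
    have hSdet : S.det ≠ 0 := hSpd.det_pos.ne'
    exact isUnit_iff_ne_zero.2 (fun h => hSdet (by rw [← h2, h, zero_mul]))
  have hRinv : R * R⁻¹ = 1 := mul_nonsing_inv R hRdet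
  have hRinv' : R⁻¹ * R = 1 := nonsing_inv_mul R hRdet
  have hSinv : S⁻¹ = R⁻¹ * R⁻¹ := by rw [← hRR, Matrix.mul_inv_rev]
  have hconj : R⁻¹ * (c • D) * R⁻¹ = S⁻¹ - c • 1 := by
    rw [hId, Matrix.mul_sub, Matrix.sub_mul, Matrix.mul_one, hSinv]
    congr 1
    rw [Matrix.mul_smul, Matrix.smul_mul]
    congr 1
    rw [← hRR]
    calc R⁻¹ * (R * R) * R⁻¹ = (R⁻¹ * R) * (R * R⁻¹) := by noncomm_ring
    _ = 1 := by rw [hRinv, hRinv', one_mul]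
  rw [← hconj]
  have hRinvH : R⁻¹ = (R⁻¹)ᴴ := (hRpsd.inv.1).symm
  nth_rewrite 2 [hRinvH]
  exact (psd_smul hD hc).mul_mul_conjTranspose_same (R⁻¹)

open scoped MatrixOrder in
lemma key2 {n : ℕ} {M : Matrix (Fin n) (Fin n) ℝ} (hM : M.PosSemidef) {D : Matrix (Fin n) (Fin n) ℝ}
    (hD : D.PosSemidef) {c : ℝ} (hc : 0 ≤ c)
    (hId : c • D = c • (1 + M) - 1) :
    (c • (1 : Matrix (Fin n) (Fin n) ℝ) - (1 + M)⁻¹).PosSemidef := by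
  set S : Matrix (Fin n) (Fin n) ℝ := 1 + M with hS
  have hSpd : S.PosDef := Matrix.PosDef.add_posSemidef Matrix.PosDef.one hM
  have hSpsd := hSpd.posSemidef
  set R := CFC.sqrt S with hR
  have hRpsd : R.PosSemidef := (CFC.sqrt_nonneg S).posSemidef
  have hRR : R * R = S := CFC.sqrt_mul_sqrt_self S hSpsd.nonneg
  have hRdet : IsUnit R.det := by
    have h2 : R.det * R.det = S.det := by rw [← det_mul, hRR]
    have hSdet : S.det ≠ 0 := hSpd.det_pos.ne'
    exact isUnit_iff_ne_zero.2 (fun h => hSdet (by rw [← h2, h, zero_mul]))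
  have hRinv : R * R⁻¹ = 1 := mul_nonsing_inv R hRdet
  have hRinv' : R⁻¹ * R = 1 := nonsing_inv_mul R hRdet
  have hSinv : S⁻¹ = R⁻¹ * R⁻¹ := by rw [← hRR, Matrix.mul_inv_rev]
  have hconj : R⁻¹ * (c • D) * R⁻¹ = c • 1 - S⁻¹ := by
    rw [hId, Matrix.mul_sub, Matrix.sub_mul, Matrix.mul_one, hSinv]
    congr 1
    rw [Matrix.mul_smul, Matrix.smul_mul]
    congr 1
    rw [← hRR]
    calc R⁻¹ * (R * R) * R⁻¹ = (R⁻¹ * R) * (R * R⁻¹) := by noncomm_ring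
    _ = 1 := by rw [hRinv, hRinv', one_mul]
  rw [← hconj]
  have hRinvH : R⁻¹ = (R⁻¹)ᴴ := (hRpsd.inv.1).symm
  nth_rewrite 2 [hRinvH]
  exact (psd_smul hD hc).mul_mul_conjTranspose_same (R⁻¹)

theorem riccati_update_sandwich {n : ℕ} (P X Ω : Matrix (Fin n) (Fin n) ℝ)
    (hP : P = X * Xᵀ) (hΩ : Ω.PosSemidef) (α β : ℝ) (hα : 0 ≤ α) (hβ : 0 ≤ β)
    (hlow : (Xᵀ * Ω * X - α • (1 : Matrix (Fin n) (Fin n) ℝ)).PosSemidef)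
    (hup : (β • (1 : Matrix (Fin n) (Fin n) ℝ) - Xᵀ * Ω * X).PosSemidef) :
    ((X * (1 + Xᵀ * Ω * X)⁻¹ * Xᵀ) - (1 / (1 + β)) • P).PosSemidef ∧
      ((1 / (1 + α)) • P - (X * (1 + Xᵀ * Ω * X)⁻¹ * Xᵀ)).PosSemidef := by
  set M : Matrix (Fin n) (Fin n) ℝ := Xᵀ * Ω * X with hMdef
  have hM : M.PosSemidef := by
    have h : M = Xᴴ * Ω * X := by rw [hMdef, conjTranspose_eq_transpose_of_trivial]
    rw [h]
    exact hΩ.conjTranspose_mul_mul_same X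
  have hβ1 : (1:ℝ) + β ≠ 0 := by positivity
  have hα1 : (1:ℝ) + α ≠ 0 := by positivity
  have hcβ : (0:ℝ) ≤ 1 / (1 + β) := by positivity
  have hcα : (0:ℝ) ≤ 1 / (1 + α) := by positivity
  constructor
  · have hkey : ((1 + M)⁻¹ - (1 / (1 + β)) • (1 : Matrix (Fin n) (Fin n) ℝ)).PosSemidef := by
      apply key hM hup hcβ
      match_scalars <;> field_simp <;> ring
    have heq : (X * (1 + M)⁻¹ * Xᵀ) - (1 / (1 + β)) • P
        = X * ((1 + M)⁻¹ - (1 / (1 + β)) • 1) * Xᴴ := by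
      rw [conjTranspose_eq_transpose_of_trivial, hP, Matrix.mul_sub, Matrix.sub_mul]
      congr 1
      rw [Matrix.mul_smul, Matrix.smul_mul, Matrix.mul_one]
    rw [heq]
    exact hkey.mul_mul_conjTranspose_same X
  · have hkey : ((1 / (1 + α)) • (1 : Matrix (Fin n) (Fin n) ℝ) - (1 + M)⁻¹).PosSemidef := by
      apply key2 hM hlow hcα
      match_scalars <;> field_simp <;> ring
    have heq : (1 / (1 + α)) • P - (X * (1 + M)⁻¹ * Xᵀ)
        = X * ((1 / (1 + α)) • 1 - (1 + M)⁻¹) * Xᴴ := by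
      rw [conjTranspose_eq_transpose_of_trivial, hP, Matrix.mul_sub, Matrix.sub_mul]
      congr 1
      rw [Matrix.mul_smul, Matrix.smul_mul, Matrix.mul_one]
    rw [heq]
    exact hkey.mul_mul_conjTranspose_same X
end

section
/- Let M be an invertible n×n real matrix, Q positive semidefinite, 0 ≤ α, and P̂ symmetric positive semidefinite satisfying P̂ ≤ (1/(1+α)) M P̂ Mᵀ + Q. Suppose v is an eigenvector of Mᵀ with eigenvalue μ satisfying |μ|²/(1+α) < 1. Then vᵀ P̂ v ≤ (vᵀ Q v) / (1 − |μ|²/(1+α)). -/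
open Matrix

theorem eigvec_upper_bound {n : ℕ} (M Q P : Matrix (Fin n) (Fin n) ℝ)
    (hM : IsUnit M) (hQ : Q.PosSemidef) (α : ℝ) (hα : 0 ≤ α)
    (hPsymm : P.IsSymm) (hPpsd : P.PosSemidef)
    (hrec : (((1 / (1 + α)) • (M * P * Mᵀ) + Q) - P).PosSemidef)
    (v : Fin n → ℝ) (μ : ℝ) (hv : v ≠ 0) (heig : Mᵀ.mulVec v = μ • v)
    (hcontract : μ ^ 2 / (1 + α) < 1) :
    v ⬝ᵥ P.mulVec v ≤ (v ⬝ᵥ Q.mulVec v) / (1 - μ ^ 2 / (1 + α)) := by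
  have hden : 0 < 1 - μ ^ 2 / (1 + α) := by linarith
  have h0 := hrec.dotProduct_mulVec_nonneg v
  simp only [star_trivial] at h0
  have heig' : v ᵥ* M = μ • v := by rw [← mulVec_transpose]; exact heig
  have hkey : v ⬝ᵥ (M * P * Mᵀ).mulVec v = μ ^ 2 * (v ⬝ᵥ P.mulVec v) := by
    rw [← mulVec_mulVec, ← mulVec_mulVec, heig]
    simp only [mulVec_smul, dotProduct_smul, dotProduct_mulVec, heig', smul_vecMul,
      smul_dotProduct, smul_eq_mul]
    ring
  rw [sub_mulVec, add_mulVec, smul_mulVec, dotProduct_sub, dotProduct_add,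
    dotProduct_smul, hkey] at h0
  rw [le_div_iff₀ hden]
  have h1 : (0:ℝ) < 1 + α := by linarith
  rw [div_eq_mul_inv] at h0 ⊢
  simp only [smul_eq_mul] at h0
  ring_nf at h0 ⊢
  linarith [h0]
end

section
/- Let M be an invertible n×n real matrix, Q positive semidefinite, β ≥ 0, and P̂ symmetric satisfying (1/(1+β)) M P̂ Mᵀ + Q ≤ P̂ and Q ≤ P̂. If v is an eigenvector of Mᵀ with eigenvalue μ, then for every k ≥ 0, (Σ_{l=0}^{k} (|μ|²/(1+β))^l) · vᵀ Q v ≤ vᵀ P̂ v. In particular if |μ|² < 1+β then (vᵀ Q v)/(1 − |μ|²/(1+β)) ≤ vᵀ P̂ v. -/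
open Matrix

theorem eigvec_lower_bound {n : ℕ} (M Q P : Matrix (Fin n) (Fin n) ℝ)
    (hM : IsUnit M) (hQ : Q.PosSemidef) (β : ℝ) (hβ : 0 ≤ β)
    (hPsymm : P.IsSymm)
    (hrec : (P - ((1 / (1 + β)) • (M * P * Mᵀ) + Q)).PosSemidef)
    (hQP : (P - Q).PosSemidef)
    (v : Fin n → ℝ) (μ : ℝ) (hv : v ≠ 0) (heig : Mᵀ.mulVec v = μ • v) :
    (∀ k : ℕ, (∑ l ∈ Finset.range (k + 1), (μ ^ 2 / (1 + β)) ^ l) * (v ⬝ᵥ Q.mulVec v)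
        ≤ v ⬝ᵥ P.mulVec v) ∧
      (μ ^ 2 < 1 + β →
        (v ⬝ᵥ Q.mulVec v) / (1 - μ ^ 2 / (1 + β)) ≤ v ⬝ᵥ P.mulVec v) := by
  have hb : (0:ℝ) < 1 + β := by linarith
  set q := v ⬝ᵥ Q.mulVec v with hq
  set p := v ⬝ᵥ P.mulVec v with hp
  set r := μ ^ 2 / (1 + β) with hr
  have hr0 : 0 ≤ r := div_nonneg (sq_nonneg μ) hb.le
  have hq0 : 0 ≤ q := by simpa using hQ.dotProduct_mulVec_nonneg v
  -- quadratic form of M P Mᵀ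
  have hMPM : v ⬝ᵥ (M * P * Mᵀ).mulVec v = μ ^ 2 * p := by
    have h1 : (M * P * Mᵀ).mulVec v = M.mulVec (P.mulVec (Mᵀ.mulVec v)) := by
      rw [Matrix.mulVec_mulVec, Matrix.mulVec_mulVec]
    rw [h1, heig, Matrix.mulVec_smul, Matrix.mulVec_smul, dotProduct_smul,
      Matrix.dotProduct_mulVec, ← Matrix.mulVec_transpose, heig]
    rw [smul_dotProduct]
    ring_nf
    rw [hp, Matrix.dotProduct_mulVec, ← Matrix.mulVec_transpose, hPsymm.eq]
    ring
  have hqp : q ≤ p := by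
    have := hQP.dotProduct_mulVec_nonneg v
    simp only [Matrix.sub_mulVec, dotProduct_sub] at this
    simp only [star_trivial] at this
    linarith [this]
  have hrec' : r * p + q ≤ p := by
    have := hrec.dotProduct_mulVec_nonneg v
    simp only [Matrix.sub_mulVec, Matrix.add_mulVec, Matrix.smul_mulVec,
      dotProduct_sub, dotProduct_add, dotProduct_smul, star_trivial, smul_eq_mul] at this
    rw [hMPM] at this
    have e : μ ^ 2 / (1 + β) * p = 1 / (1 + β) * (μ ^ 2 * p) := by ring
    rw [hr, e]
    linarith [this]
  have hmain : ∀ k : ℕ, (∑ l ∈ Finset.range (k + 1), r ^ l) * q ≤ p := by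
    intro k
    induction k with
    | zero => simpa using hqp
    | succ k ih =>
      rw [Finset.sum_range_succ', add_mul]
      have h0 : (∑ i ∈ Finset.range (k + 1), r ^ (i + 1))
          = r * ∑ l ∈ Finset.range (k + 1), r ^ l := by
        rw [Finset.mul_sum]
        exact Finset.sum_congr rfl fun i _ => by ring
      have h1 : (∑ i ∈ Finset.range (k + 1), r ^ (i + 1)) * q
          = r * ((∑ l ∈ Finset.range (k + 1), r ^ l) * q) := by
        rw [h0, mul_assoc]
      have hp0 : 0 ≤ p := le_trans hq0 hqp
      have h2 : r * ((∑ l ∈ Finset.range (k + 1), r ^ l) * q) ≤ r * p :=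
        mul_le_mul_of_nonneg_left ih hr0
      simp only [pow_zero, one_mul]
      calc (∑ i ∈ Finset.range (k + 1), r ^ (i + 1)) * q + q
          ≤ r * p + q := by rw [h1]; linarith
        _ ≤ p := hrec'
  refine ⟨hmain, fun hμ => ?_⟩
  have hr1 : r < 1 := (div_lt_one hb).mpr hμ
  have hsum : HasSum (fun l : ℕ => r ^ l) (1 - r)⁻¹ :=
    hasSum_geometric_of_lt_one hr0 hr1
  have htend : Filter.Tendsto (fun k : ℕ => (∑ l ∈ Finset.range (k + 1), r ^ l) * q)
      Filter.atTop (nhds ((1 - r)⁻¹ * q)) := by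
    have := hsum.tendsto_sum_nat
    exact ((this.comp (Filter.tendsto_add_atTop_nat 1)).mul_const q)
  have : (1 - r)⁻¹ * q ≤ p := le_of_tendsto htend (Filter.Eventually.of_forall hmain)
  rw [div_eq_inv_mul]
  exact this
end

section
/- Suppose a sequence of positive semidefinite n×n matrices (P_k) satisfies the unfiltered recursion P_k = M_k P_{k−1} M_kᵀ + Q_k with P₀ = Q₀, and suppose Q_l = B_l D B_lᵀ where each B_l is orthogonal and D is diagonal with entries D_i, and M_k B_{k−1} = B_k T_k with T_k upper triangular (QR covariance relation). Then for every unit vector e_i (the i-th standard basis vector), e_iᵀ B_kᵀ P_k B_k e_i = Σ_{l=0}^{k} e_iᵀ T_{k:l} D T_{k:l}ᵀ e_i, where T_{k:l} = T_k ⋯ T_{l+1} with T_{k:k} = I. -/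
open Matrix

/-- Product of triangular transition matrices `T_{k:l} = T_k ⋯ T_{l+1}`, `T_{k:k} = 1`. -/
def prodT {n : ℕ} (T : ℕ → Matrix (Fin n) (Fin n) ℝ) (l : ℕ) : ℕ → Matrix (Fin n) (Fin n) ℝ
  | 0 => 1
  | k + 1 => if k + 1 ≤ l then 1 else T (k + 1) * prodT T l k

theorem unfiltered_variance_in_blv_frame {n : ℕ}
    (M Q P B T : ℕ → Matrix (Fin n) (Fin n) ℝ) (d : Fin n → ℝ)
    (hP0 : P 0 = Q 0)
    (hrec : ∀ k, 1 ≤ k → P k = M k * P (k - 1) * (M k)ᵀ + Q k)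
    (hPpsd : ∀ k, (P k).PosSemidef)
    (hQ : ∀ l, Q l = B l * Matrix.diagonal d * (B l)ᵀ)
    (hBorth : ∀ l, (B l)ᵀ * B l = 1 ∧ B l * (B l)ᵀ = 1)
    (hT : ∀ k, ∀ i j : Fin n, (j : ℕ) < (i : ℕ) → T k i j = 0)
    (hQR : ∀ k, 1 ≤ k → M k * B (k - 1) = B k * T k) :
    ∀ k, ∀ i : Fin n,
      ((B k)ᵀ * P k * B k) i i =
        ∑ l ∈ Finset.range (k + 1),
          (prodT T l k * Matrix.diagonal d * (prodT T l k)ᵀ) i i := by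
  have key : ∀ k, (B k)ᵀ * P k * B k =
      ∑ l ∈ Finset.range (k + 1), prodT T l k * Matrix.diagonal d * (prodT T l k)ᵀ := by
    intro k
    induction k with
    | zero =>
      simp only [zero_add, Finset.sum_range_one]
      have : prodT T 0 0 = (1 : Matrix (Fin n) (Fin n) ℝ) := rfl
      rw [this, hP0, hQ 0, Matrix.transpose_one, mul_one, one_mul]
      calc (B 0)ᵀ * (B 0 * Matrix.diagonal d * (B 0)ᵀ) * B 0
          = ((B 0)ᵀ * B 0) * Matrix.diagonal d * ((B 0)ᵀ * B 0) := by
            simp only [mul_assoc]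
        _ = Matrix.diagonal d := by rw [(hBorth 0).1]; simp
    | succ k ih =>
      have hrec' := hrec (k + 1) (by omega)
      simp only [Nat.add_sub_cancel] at hrec'
      have hQR' := hQR (k + 1) (by omega)
      simp only [Nat.add_sub_cancel] at hQR'
      have hM : M (k + 1) = B (k + 1) * T (k + 1) * (B k)ᵀ := by
        calc M (k + 1) = M (k + 1) * (B k * (B k)ᵀ) := by rw [(hBorth k).2, mul_one]
          _ = (M (k + 1) * B k) * (B k)ᵀ := by rw [mul_assoc]
          _ = B (k + 1) * T (k + 1) * (B k)ᵀ := by rw [hQR']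
      have hMt : (M (k + 1))ᵀ = B k * (T (k + 1))ᵀ * (B (k + 1))ᵀ := by
        rw [hM]; simp [Matrix.transpose_mul, mul_assoc]
      have hmid : (B (k + 1))ᵀ * (M (k + 1) * P k * (M (k + 1))ᵀ) * B (k + 1)
          = T (k + 1) * ((B k)ᵀ * P k * B k) * (T (k + 1))ᵀ := by
        rw [hMt, hM]
        calc (B (k + 1))ᵀ * (B (k + 1) * T (k + 1) * (B k)ᵀ * P k *
              (B k * (T (k + 1))ᵀ * (B (k + 1))ᵀ)) * B (k + 1)
            = ((B (k + 1))ᵀ * B (k + 1)) * T (k + 1) * ((B k)ᵀ * P k * B k) *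
              (T (k + 1))ᵀ * ((B (k + 1))ᵀ * B (k + 1)) := by
              simp only [mul_assoc]
          _ = T (k + 1) * ((B k)ᵀ * P k * B k) * (T (k + 1))ᵀ := by
              rw [(hBorth (k + 1)).1]; simp [mul_assoc]
      have hQterm : (B (k + 1))ᵀ * Q (k + 1) * B (k + 1) = Matrix.diagonal d := by
        rw [hQ (k + 1)]
        calc (B (k + 1))ᵀ * (B (k + 1) * Matrix.diagonal d * (B (k + 1))ᵀ) * B (k + 1)
            = ((B (k + 1))ᵀ * B (k + 1)) * Matrix.diagonal d *
              ((B (k + 1))ᵀ * B (k + 1)) := by simp only [mul_assoc]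
          _ = Matrix.diagonal d := by rw [(hBorth (k + 1)).1]; simp
      rw [hrec', mul_add, add_mul, hmid, hQterm, ih, Finset.mul_sum, Finset.sum_mul,
        Finset.sum_range_succ _ (k + 1)]
      congr 1
      · apply Finset.sum_congr rfl
        intro l hl
        have hl' : ¬ (k + 1 ≤ l) := by
          simp only [Finset.mem_range] at hl; omega
        have hp : prodT T l (k + 1) = T (k + 1) * prodT T l k := by
          simp [prodT, hl']
        rw [hp]
        simp [Matrix.transpose_mul, mul_assoc]
      · have hp : prodT T (k + 1) (k + 1) = 1 := by simp [prodT]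
        rw [hp]
        simp
  intro k i
  rw [key k]
  simp [Matrix.sum_apply]
end
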